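/- Let k be a field, V a k-vector space equipped with a descending chain of subspaces V = F^0 ⊇ F^1 ⊇ F^2 ⊇ ⋯, W a k-vector space, and Z : V → W a k-linear map such that for every d ≥ 0 and every linear functional v : V → k vanishing on F^{d+1} there exists a linear functional u : W → k with u ∘ Z = v. Then for every d ≥ 0, if a ∈ V satisfies Z(a) ∈ Z(F^{d+1}) then a ∈ F^{d+1}; in particular, for every d the induced linear map F^d/F^{d+1} → Z(F^d)/Z(F^{d+1}) is injective. -/
import Mathlib


/-!
Statement 3: Abstract injectivity lemma (Lemma 1 of the paper). If every linear
functional vanishing on `F^{d+1}` factors through `Z`, then `Z a ∈ Z(F^{d+1})`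
implies `a ∈ F^{d+1}`, and the induced maps `F^d/F^{d+1} → Z(F^d)/Z(F^{d+1})`
are injective.
-/

/-- The induced linear map `F^d/F^{d+1} → Z(F^d)/Z(F^{d+1})` determined by
`x mod F^{d+1} ↦ Z x mod Z(F^{d+1})`. -/
noncomputable def filtrationInducedMap {k V W : Type*} [Field k] [AddCommGroup V]
    [Module k V] [AddCommGroup W] [Module k W] (F : ℕ → Submodule k V)
    (Z : V →ₗ[k] W) (d : ℕ) :
    ((F d) ⧸ ((F (d + 1)).comap (F d).subtype)) →ₗ[k]
      (((F d).map Z) ⧸ (((F (d + 1)).map Z).comap ((F d).map Z).subtype)) :=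
  Submodule.liftQ _
    ((Submodule.mkQ _).comp
      (LinearMap.codRestrict ((F d).map Z) (Z.comp (F d).subtype)
        (fun x => Submodule.mem_map_of_mem x.2)))
    (by
      intro x hx
      simp only [Submodule.mem_comap] at hx ⊢
      simp only [LinearMap.mem_ker, LinearMap.comp_apply, Submodule.mkQ_apply,
        Submodule.Quotient.mk_eq_zero, Submodule.mem_comap]
      exact Submodule.mem_map_of_mem hx)

/-- Let `k` be a field, `V` a `k`-vector space with a descending chain of
subspaces `V = F 0 ⊇ F 1 ⊇ ⋯`, `W` a `k`-vector space and `Z : V →ₗ[k] W` such that every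
linear functional on `V` vanishing on `F (d+1)` factors as `u ∘ Z` for some functional `u`
on `W`.  Then `Z a ∈ Z(F (d+1))` implies `a ∈ F (d+1)`, and each induced map
`F d / F (d+1) → Z(F d) / Z(F (d+1))` is injective. -/
theorem filtration_injectivity {k V W : Type*} [Field k] [AddCommGroup V] [Module k V]
    [AddCommGroup W] [Module k W] (F : ℕ → Submodule k V) (hF0 : F 0 = ⊤)
    (hdesc : ∀ d : ℕ, F (d + 1) ≤ F d) (Z : V →ₗ[k] W)
    (huniv : ∀ (d : ℕ) (v : V →ₗ[k] k), (∀ x ∈ F (d + 1), v x = 0) →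
      ∃ u : W →ₗ[k] k, u.comp Z = v) :
    (∀ (d : ℕ) (a : V), Z a ∈ (F (d + 1)).map Z → a ∈ F (d + 1)) ∧
    (∀ d : ℕ, Function.Injective (filtrationInducedMap F Z d)) := by
  have key : ∀ (d : ℕ) (a : V), Z a ∈ (F (d + 1)).map Z → a ∈ F (d + 1) := by
    intro d a ha
    by_contra hna
    have hq : Submodule.Quotient.mk (p := F (d+1)) a ≠ 0 := by
      simpa [Submodule.Quotient.mk_eq_zero] using hna
    obtain ⟨φ, hφ⟩ := (not_forall.mp
      (fun h => hq ((Module.forall_dual_apply_eq_zero_iff k _).mp h)))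
    set v : V →ₗ[k] k := φ.comp (Submodule.mkQ (F (d+1))) with hv
    have hv0 : ∀ x ∈ F (d + 1), v x = 0 := by
      intro x hx
      simp [hv, (Submodule.Quotient.mk_eq_zero _).mpr hx]
    obtain ⟨u, hu⟩ := huniv d v hv0
    obtain ⟨b, hb, hzb⟩ := ha
    have h1 : v a = u (Z a) := by rw [← hu]; rfl
    have h2 : v b = u (Z b) := by rw [← hu]; rfl
    have : v a = 0 := by rw [h1, ← hzb, ← h2]; exact hv0 b hb
    exact hφ this
  refine ⟨key, fun d => ?_⟩
  rw [← LinearMap.ker_eq_bot]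
  rw [Submodule.eq_bot_iff]
  intro x hx
  obtain ⟨y, rfl⟩ := Submodule.mkQ_surjective _ x
  simp only [LinearMap.mem_ker, filtrationInducedMap, Submodule.mkQ_apply,
    Submodule.liftQ_apply, LinearMap.comp_apply,
    Submodule.Quotient.mk_eq_zero, Submodule.mem_comap] at hx ⊢
  exact key d y hx
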